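/- Switch structure of the low-complexity suboptimal policy in the uniform case (Theorem 4, part 1, of the paper): in the uniform-channel setting, suppose V : 𝒬 → ℝ is separable with monotone components, i.e., V(Q) = Σ_m V_m(Q m) where each V_m : ℕ → ℝ is non-decreasing. If content u minimizes the state-action cost at state Q, i.e., J_V(Q, u) ≤ J_V(Q, v) for all v ∈ Fin M, and Q u < N u, then J_V(Q + e_u, u) ≤ J_V(Q + e_u, v) for all v ∈ Fin M. Hence the suboptimal policy μ̂* built from the separable approximate value function has the same switch structure as the optimal policy. -/

import Mathlib

open Finset

/-- State space of the uniform-channel multicast MDP: request queue vectors capped by `N`. -/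
def QSpace (M : ℕ) (N : Fin M → ℕ) : Type :=
  {Q : Fin M → ℕ // ∀ m, Q m ≤ N m}

/-- Next state when content `u` is multicast in state `Q` and arrival `a` occurs. -/
def nextQ {M : ℕ} {N : Fin M → ℕ} (Q : QSpace M N) (u : Fin M) (a : Fin M → ℕ) :
    QSpace M N :=
  ⟨fun m => min ((if m = u then 0 else Q.1 m) + a m) (N m), fun _ => min_le_right _ _⟩

/-- Per-stage cost in the uniform case. -/
noncomputable def gCost {M : ℕ} {N : Fin M → ℕ} (wp wf : ℝ) (p f : Fin M → ℝ)
    (Q : QSpace M N) (u : Fin M) : ℝ :=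
  (∑ m, (Q.1 m : ℝ)) + wp * p u + wf * f u

/-- State-action cost function `J_V(Q,u)`. -/
noncomputable def JCost {M : ℕ} {N : Fin M → ℕ} (𝒜 : Finset (Fin M → ℕ))
    (ρ : (Fin M → ℕ) → ℝ) (wp wf : ℝ) (p f : Fin M → ℝ)
    (V : QSpace M N → ℝ) (Q : QSpace M N) (u : Fin M) : ℝ :=
  gCost wp wf p f Q u + ∑ a ∈ 𝒜, ρ a * V (nextQ Q u a)

/-- The state `Q + e_u`: component `u` is increased by 1 (requires `Q u < N u`). -/
def addE {M : ℕ} {N : Fin M → ℕ} (Q : QSpace M N) (u : Fin M) (h : Q.1 u < N u) :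
    QSpace M N :=
  ⟨Function.update Q.1 u (Q.1 u + 1), by
    intro m
    rcases eq_or_ne m u with rfl | hm
    · rw [Function.update_self]; exact h
    · rw [Function.update_of_ne hm]; exact Q.2 m⟩

/-!
Adding a request to the queue of content `u` raises the per-stage cost of every action by
exactly one. Under action `u` the extra request is served at once, so the successor states
do not change and `J_V(·, u)` grows by exactly one. Under any other action the successor
states can only grow componentwise, so for a componentwise monotone `V` the cost `J_V(·, v)`
grows by at least one. Separable value functions with non-decreasing components are monotone.
-/

namespace QSpace

variable {M : ℕ} {N : Fin M → ℕ}

instance : PartialOrder (QSpace M N) :=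
  inferInstanceAs (PartialOrder {Q : Fin M → ℕ // ∀ m, Q m ≤ N m})

theorem le_def {Q Q' : QSpace M N} : Q ≤ Q' ↔ ∀ m, Q.1 m ≤ Q'.1 m := Iff.rfl

end QSpace

section SwitchStructure

variable {M : ℕ} {N : Fin M → ℕ}

theorem nextQ_mono (u : Fin M) (a : Fin M → ℕ) :
    Monotone fun Q : QSpace M N => nextQ Q u a := by
  intro Q Q' hQ
  rw [QSpace.le_def] at hQ ⊢
  intro m
  by_cases hm : m = u
  · simp [nextQ, hm]
  · simpa [nextQ, hm] using min_le_min_right (N m) (Nat.add_le_add_right (hQ m) (a m))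

theorem le_addE (Q : QSpace M N) (u : Fin M) (h : Q.1 u < N u) : Q ≤ addE Q u h := by
  intro m
  rcases eq_or_ne m u with rfl | hm
  · simp [addE]
  · simp [addE, Function.update_of_ne hm]

theorem nextQ_addE_self (Q : QSpace M N) (u : Fin M) (h : Q.1 u < N u) (a : Fin M → ℕ) :
    nextQ (addE Q u h) u a = nextQ Q u a := by
  apply Subtype.ext
  funext m
  rcases eq_or_ne m u with rfl | hm
  · simp [nextQ]
  · simp [nextQ, hm, addE]

theorem sum_addE (Q : QSpace M N) (u : Fin M) (h : Q.1 u < N u) :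
    ∑ m, ((addE Q u h).1 m : ℝ) = ∑ m, (Q.1 m : ℝ) + 1 := by
  have hcomp : ∀ m, ((addE Q u h).1 m : ℝ) = Q.1 m + if m = u then 1 else 0 := by
    intro m
    rcases eq_or_ne m u with rfl | hm
    · simp [addE]
    · simp [addE, hm]
  simp only [hcomp, sum_add_distrib, sum_ite_eq', mem_univ, if_true]

theorem gCost_addE (wp wf : ℝ) (p f : Fin M → ℝ) (Q : QSpace M N) (u : Fin M)
    (h : Q.1 u < N u) (v : Fin M) :
    gCost wp wf p f (addE Q u h) v = gCost wp wf p f Q v + 1 := by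
  simp only [gCost, sum_addE]
  ring

theorem expectedCost_mono_of_nonneg (𝒜 : Finset (Fin M → ℕ)) (ρ : (Fin M → ℕ) → ℝ)
    (hρ0 : ∀ a ∈ 𝒜, 0 ≤ ρ a) {V : QSpace M N → ℝ} (hV : Monotone V) (v : Fin M) :
    Monotone fun Q : QSpace M N => ∑ a ∈ 𝒜, ρ a * V (nextQ Q v a) :=
  fun _ _ hQ => sum_le_sum fun a ha =>
    mul_le_mul_of_nonneg_left (hV (nextQ_mono v a hQ)) (hρ0 a ha)

variable (𝒜 : Finset (Fin M → ℕ)) (ρ : (Fin M → ℕ) → ℝ) (wp wf : ℝ) (p f : Fin M → ℝ)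

theorem JCost_addE_self (V : QSpace M N → ℝ) (Q : QSpace M N) (u : Fin M)
    (h : Q.1 u < N u) :
    JCost 𝒜 ρ wp wf p f V (addE Q u h) u = JCost 𝒜 ρ wp wf p f V Q u + 1 := by
  simp only [JCost, gCost_addE, nextQ_addE_self]
  ring

theorem JCost_add_one_le_JCost_addE (hρ0 : ∀ a ∈ 𝒜, 0 ≤ ρ a) {V : QSpace M N → ℝ}
    (hV : Monotone V) (Q : QSpace M N) (u : Fin M) (h : Q.1 u < N u) (v : Fin M) :
    JCost 𝒜 ρ wp wf p f V Q v + 1 ≤ JCost 𝒜 ρ wp wf p f V (addE Q u h) v := by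
  have hfuture := expectedCost_mono_of_nonneg 𝒜 ρ hρ0 hV v (le_addE Q u h)
  simp only [JCost, gCost_addE] at hfuture ⊢
  linarith

theorem JCost_addE_self_le_of_monotone (hρ0 : ∀ a ∈ 𝒜, 0 ≤ ρ a) {V : QSpace M N → ℝ}
    (hV : Monotone V) (Q : QSpace M N) (u : Fin M) (h : Q.1 u < N u)
    (hmin : ∀ v, JCost 𝒜 ρ wp wf p f V Q u ≤ JCost 𝒜 ρ wp wf p f V Q v) (v : Fin M) :
    JCost 𝒜 ρ wp wf p f V (addE Q u h) u ≤ JCost 𝒜 ρ wp wf p f V (addE Q u h) v := by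
  calc JCost 𝒜 ρ wp wf p f V (addE Q u h) u
      = JCost 𝒜 ρ wp wf p f V Q u + 1 := JCost_addE_self 𝒜 ρ wp wf p f V Q u h
    _ ≤ JCost 𝒜 ρ wp wf p f V Q v + 1 := by linarith [hmin v]
    _ ≤ JCost 𝒜 ρ wp wf p f V (addE Q u h) v :=
      JCost_add_one_le_JCost_addE 𝒜 ρ wp wf p f hρ0 hV Q u h v

end SwitchStructure

theorem monotone_sum_apply {M : ℕ} {N : Fin M → ℕ} {Vm : Fin M → ℕ → ℝ}
    (hVm : ∀ m, Monotone (Vm m)) : Monotone fun Q : QSpace M N => ∑ m, Vm m (Q.1 m) :=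
  fun _ _ hQ => sum_le_sum fun m _ => hVm m (hQ m)

theorem suboptimal_policy_switch_structure_general
    {M : ℕ} (N : Fin M → ℕ)
    (𝒜 : Finset (Fin M → ℕ)) (ρ : (Fin M → ℕ) → ℝ)
    (hρ0 : ∀ a ∈ 𝒜, 0 ≤ ρ a)
    (wp wf : ℝ) (p f : Fin M → ℝ)
    (Vm : Fin M → ℕ → ℝ) (hVm : ∀ m, Monotone (Vm m)) :
    ∀ (Q : QSpace M N) (u : Fin M) (h : Q.1 u < N u),
      (∀ v : Fin M,
        JCost 𝒜 ρ wp wf p f (fun Q' => ∑ m, Vm m (Q'.1 m)) Q u ≤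
          JCost 𝒜 ρ wp wf p f (fun Q' => ∑ m, Vm m (Q'.1 m)) Q v) →
      ∀ v : Fin M,
        JCost 𝒜 ρ wp wf p f (fun Q' => ∑ m, Vm m (Q'.1 m)) (addE Q u h) u ≤
          JCost 𝒜 ρ wp wf p f (fun Q' => ∑ m, Vm m (Q'.1 m)) (addE Q u h) v :=
  JCost_addE_self_le_of_monotone 𝒜 ρ wp wf p f hρ0 (monotone_sum_apply hVm)

/-- Switch structure of the low-complexity suboptimal policy in the uniform case
(Theorem 4, part 1): for a separable value function `V(Q) = Σ_m V_m(Q_m)` with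
non-decreasing components `V_m`, if content `u` minimizes the state-action cost at `Q`,
then it still does at `Q + e_u`. -/
theorem suboptimal_policy_switch_structure
    {M : ℕ} (hM : 1 ≤ M) (N : Fin M → ℕ)
    (𝒜 : Finset (Fin M → ℕ)) (ρ : (Fin M → ℕ) → ℝ)
    (hρ0 : ∀ a ∈ 𝒜, 0 ≤ ρ a) (hρ1 : ∑ a ∈ 𝒜, ρ a = 1)
    (wp wf : ℝ) (p f : Fin M → ℝ)
    (Vm : Fin M → ℕ → ℝ) (hVm : ∀ m, Monotone (Vm m)) :
    ∀ (Q : QSpace M N) (u : Fin M) (h : Q.1 u < N u),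
      (∀ v : Fin M,
        JCost 𝒜 ρ wp wf p f (fun Q' => ∑ m, Vm m (Q'.1 m)) Q u ≤
          JCost 𝒜 ρ wp wf p f (fun Q' => ∑ m, Vm m (Q'.1 m)) Q v) →
      ∀ v : Fin M,
        JCost 𝒜 ρ wp wf p f (fun Q' => ∑ m, Vm m (Q'.1 m)) (addE Q u h) u ≤
          JCost 𝒜 ρ wp wf p f (fun Q' => ∑ m, Vm m (Q'.1 m)) (addE Q u h) v :=
  suboptimal_policy_switch_structure_general N 𝒜 ρ hρ0 wp wf p f Vm hVm
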